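/- arXiv:2403.17028 — 2 statements merged into one kernel-verified Lean document; each statement's English description precedes it below -/
import Mathlib

section
/- For any dyadic rationals a < b < c such that the subgroupoid generated by {a,b} equals all dyadic rationals in [a,b] (i.e., [a,b] ∩ D is a dyadic simplex with (b−a) a power of 2 times a unit), the subgroupoid of (D, ∘) generated by {a, b, c} equals the set of all dyadic rationals in [a,c]. -/
/-!
Let `S` be the closure of `{a, b, c}`; it contains the dyadic points of `[a, b]`. Let `f` and `g`
be the affine maps with `f a = a`, `f b = c`, `g a = b`, `g b = c`. For every `u` in the closure
of `{a, b}`, `S` contains all dyadic points of `[f u, g u]`: this holds for `u = a` and `u = b`,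
and it passes to means, because a dyadic point of the segment between the midpoints of two such
segments is the mean of a dyadic point of each. By the hypothesis on `[a, b]` this applies to
every dyadic `u ∈ [a, b]`, and these segments cover `[b, c]`.
-/

def IsDyadic (x : ℝ) : Prop := ∃ k : ℤ, ∃ n : ℕ, x = (k : ℝ) / 2 ^ n

inductive MeanClosure (X : Set ℝ) : ℝ → Prop
  | base {x : ℝ} : x ∈ X → MeanClosure X x
  | mean {x y : ℝ} : MeanClosure X x → MeanClosure X y → MeanClosure X ((x + y) / 2)

namespace IsDyadic

variable {x y : ℝ}

theorem add (hx : IsDyadic x) (hy : IsDyadic y) : IsDyadic (x + y) := by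
  obtain ⟨k, n, rfl⟩ := hx
  obtain ⟨l, m, rfl⟩ := hy
  refine ⟨k * 2 ^ m + l * 2 ^ n, n + m, ?_⟩
  push_cast
  field_simp
  ring

theorem neg (hx : IsDyadic x) : IsDyadic (-x) := by
  obtain ⟨k, n, rfl⟩ := hx
  exact ⟨-k, n, by push_cast; ring⟩

theorem sub (hx : IsDyadic x) (hy : IsDyadic y) : IsDyadic (x - y) := by
  simpa only [sub_eq_add_neg] using hx.add hy.neg

theorem mul (hx : IsDyadic x) (hy : IsDyadic y) : IsDyadic (x * y) := by
  obtain ⟨k, n, rfl⟩ := hx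
  obtain ⟨l, m, rfl⟩ := hy
  exact ⟨k * l, n + m, by push_cast; rw [pow_add, div_mul_div_comm]⟩

theorem div_two (hx : IsDyadic x) : IsDyadic (x / 2) := by
  obtain ⟨k, n, rfl⟩ := hx
  exact ⟨k, n + 1, by rw [pow_succ, div_div]⟩

theorem mean (hx : IsDyadic x) (hy : IsDyadic y) : IsDyadic ((x + y) / 2) :=
  (hx.add hy).div_two

theorem reflect (hx : IsDyadic x) (hy : IsDyadic y) : IsDyadic (2 * x - y) := by
  simpa only [two_mul] using (hx.add hx).sub hy

end IsDyadic

theorem exists_isDyadic_btwn {x y : ℝ} (h : x < y) : ∃ t, IsDyadic t ∧ x < t ∧ t < y := by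
  obtain ⟨m, hm⟩ := pow_unbounded_of_one_lt (y - x)⁻¹ (one_lt_two : (1 : ℝ) < 2)
  obtain ⟨z, hz⟩ := exists_div_btwn (n := 2 ^ m) h (by exact_mod_cast hm)
  exact ⟨z / 2 ^ m, ⟨z, m, rfl⟩, by exact_mod_cast hz⟩

def IsMeanClosed (S : Set ℝ) : Prop := ∀ x ∈ S, ∀ y ∈ S, (x + y) / 2 ∈ S

theorem MeanClosure.mem {X S : Set ℝ} (hS : IsMeanClosed S) (hXS : X ⊆ S) {x : ℝ}
    (hx : MeanClosure X x) : x ∈ S := by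
  induction hx with
  | base h => exact hXS h
  | mean _ _ ihx ihy => exact hS _ ihx _ ihy

theorem isMeanClosed_meanClosure (X : Set ℝ) : IsMeanClosed {x | MeanClosure X x} :=
  fun _ hx _ hy => .mean hx hy

theorem MeanClosure.mono {X Y : Set ℝ} (h : X ⊆ Y) {x : ℝ} (hx : MeanClosure X x) :
    MeanClosure Y x :=
  hx.mem (isMeanClosed_meanClosure Y) fun _ hy => .base (h hy)

def dyadicIcc (p q : ℝ) : Set ℝ := {x | IsDyadic x ∧ p ≤ x ∧ x ≤ q}

theorem isMeanClosed_dyadicIcc (p q : ℝ) : IsMeanClosed (dyadicIcc p q) :=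
  fun _ ⟨hx, hpx, hxq⟩ _ ⟨hy, hpy, hyq⟩ => ⟨hx.mean hy, by linarith, by linarith⟩

def ContainsDyadicIcc (S : Set ℝ) (p q : ℝ) : Prop :=
  IsDyadic p ∧ IsDyadic q ∧ p ≤ q ∧ dyadicIcc p q ⊆ S

namespace ContainsDyadicIcc

variable {S : Set ℝ}

theorem of_mem {p : ℝ} (hp : IsDyadic p) (hpS : p ∈ S) : ContainsDyadicIcc S p p :=
  ⟨hp, hp, le_rfl, fun _ ⟨_, hpx, hxp⟩ => le_antisymm hxp hpx ▸ hpS⟩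

theorem mean (hS : IsMeanClosed S) {p q r s : ℝ} (h₁ : ContainsDyadicIcc S p q)
    (h₂ : ContainsDyadicIcc S r s) : ContainsDyadicIcc S ((p + r) / 2) ((q + s) / 2) := by
  obtain ⟨hp, hq, hpq, hpqS⟩ := h₁
  obtain ⟨hr, hs, hrs, hrsS⟩ := h₂
  refine ⟨hp.mean hr, hq.mean hs, by linarith, fun e ⟨he, hle, hge⟩ => ?_⟩
  -- `e` is the mean of `x ∈ [p, q]` and its reflection `2 e - x ∈ [r, s]`
  set x := max p (2 * e - s)
  have hx : x ∈ dyadicIcc p q :=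
    ⟨max_rec' IsDyadic hp (he.reflect hs), le_max_left _ _, max_le hpq (by linarith)⟩
  have hxr : x ≤ 2 * e - r := max_le (by linarith) (by linarith)
  have hx' : 2 * e - x ∈ dyadicIcc r s :=
    ⟨he.reflect hx.1, by linarith, by linarith [le_max_right p (2 * e - s)]⟩
  simpa using hS _ (hpqS hx) _ (hrsS hx')

theorem of_meanClosure (hS : IsMeanClosed S) {f g : ℝ → ℝ}
    (hf : ∀ u v, f ((u + v) / 2) = (f u + f v) / 2)
    (hg : ∀ u v, g ((u + v) / 2) = (g u + g v) / 2) {X : Set ℝ}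
    (hX : ∀ u ∈ X, ContainsDyadicIcc S (f u) (g u)) {u : ℝ} (hu : MeanClosure X u) :
    ContainsDyadicIcc S (f u) (g u) :=
  hu.mem (S := {u | ContainsDyadicIcc S (f u) (g u)})
    (fun u hu v hv => by simpa only [Set.mem_ofPred_eq, hf, hg] using hu.mean hS hv) hX

end ContainsDyadicIcc

theorem exists_mem_dyadicIcc_affine_le_le {a b c x : ℝ} (ha : IsDyadic a) (hb : IsDyadic b)
    (hab : a < b) (hbx : b < x) (hxc : x < c) :
    ∃ u ∈ dyadicIcc a b,
      a + (u - a) / (b - a) * (c - a) ≤ x ∧ x ≤ b + (u - a) / (b - a) * (c - b) := by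
  have hlt : (x - b) / (c - b) < (x - a) / (c - a) := by
    rw [div_lt_div_iff₀ (by linarith) (by linarith)]
    nlinarith
  obtain ⟨t, ht, hlo, hhi⟩ := exists_isDyadic_btwn hlt
  have ht₀ : 0 < t := lt_of_le_of_lt (div_nonneg (by linarith) (by linarith)) hlo
  have ht₁ : t < 1 := hhi.trans ((div_lt_one (by linarith)).2 (by linarith))
  have hlo' := (div_lt_iff₀ (by linarith)).1 hlo
  have hhi' := (lt_div_iff₀ (by linarith)).1 hhi
  refine ⟨a + t * (b - a), ⟨ha.add (ht.mul (hb.sub ha)), by nlinarith, by nlinarith⟩, ?_⟩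
  rw [add_sub_cancel_left, mul_div_assoc, div_self (by linarith), mul_one]
  constructor <;> linarith

theorem three_gen_lemma (a b c : ℝ)
    (ha : IsDyadic a) (hb : IsDyadic b) (hc : IsDyadic c)
    (hab : a < b) (hbc : b < c)
    (hsimp : {x : ℝ | MeanClosure {a, b} x} = {x : ℝ | IsDyadic x ∧ a ≤ x ∧ x ≤ b}) :
    {x : ℝ | MeanClosure {a, b, c} x} = {x : ℝ | IsDyadic x ∧ a ≤ x ∧ x ≤ c} := by
  set S := {x : ℝ | MeanClosure {a, b, c} x}
  have hS : IsMeanClosed S := isMeanClosed_meanClosure _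
  have hcS : c ∈ S := .base (by simp)
  have habS : dyadicIcc a b ⊆ S := fun _ hx =>
    MeanClosure.mono (Set.insert_subset_insert (Set.singleton_subset_iff.2 (Set.mem_insert b {c})))
      (hsimp.ge hx)
  let f : ℝ → ℝ := fun u => a + (u - a) / (b - a) * (c - a)
  let g : ℝ → ℝ := fun u => b + (u - a) / (b - a) * (c - b)
  have hsegment : ∀ u, MeanClosure {a, b} u → ContainsDyadicIcc S (f u) (g u) := by
    refine fun u => ContainsDyadicIcc.of_meanClosure hS (fun _ _ => by ring) (fun _ _ => by ring) ?_
    rintro u (rfl | rfl)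
    · simpa [f, g] using ⟨ha, hb, hab.le, habS⟩
    · simpa [f, g, div_self (sub_ne_zero.2 hab.ne')] using ContainsDyadicIcc.of_mem hc hcS
  have hgens : {a, b, c} ⊆ dyadicIcc a c := by
    rintro x (rfl | rfl | rfl) <;> exact ⟨by assumption, by linarith, by linarith⟩
  refine subset_antisymm (fun x hx => hx.mem (isMeanClosed_dyadicIcc a c) hgens) ?_
  rintro x ⟨hx, hax, hxc⟩
  obtain hxb | hbx := le_or_gt x b
  · exact habS ⟨hx, hax, hxb⟩
  obtain rfl | hxc := hxc.eq_or_lt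
  · exact hcS
  obtain ⟨u, hu, hfu, hgu⟩ := exists_mem_dyadicIcc_affine_le_le ha hb hab hbx hxc
  exact (hsegment u (hsimp.ge hu)).2.2.2 ⟨hx, hfu, hgu⟩
end

section
/- The subgroupoid of (D², ∘) generated by the four points A₀=(0,0), A₁=(1,3), A₂=(3,0), A₃=(1,1) does not contain the point (1,0), even though (1,0) lies in the real convex hull of {A₀, A₁, A₂}. -/
inductive MeanClosure2 (X : Set (ℝ × ℝ)) : (ℝ × ℝ) → Prop
  | base {p} : p ∈ X → MeanClosure2 X p
  | mean {p q} : MeanClosure2 X p → MeanClosure2 X q →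
      MeanClosure2 X ((p.1 + q.1) / 2, (p.2 + q.2) / 2)

/-! A point of the closure on the line `y = 0` can only arise from points of the generating set on
that line, because all four generators lie in the closed half-plane `y ≥ 0`, which is closed under
midpoints. The generators on the line are `(0,0)` and `(3,0)`, whose first coordinates are dyadic
multiples of `3`, and this property is preserved by midpoints; but `1 = 3 · (1/3)` and `1/3` is not
dyadic. -/

namespace IsDyadic

lemma of_int (k : ℤ) : IsDyadic k := ⟨k, 0, by simp⟩

lemma avg {a b : ℝ} (ha : IsDyadic a) (hb : IsDyadic b) : IsDyadic ((a + b) / 2) := by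
  obtain ⟨k, n, rfl⟩ := ha
  obtain ⟨l, m, rfl⟩ := hb
  refine ⟨k * 2 ^ m + l * 2 ^ n, n + m + 1, ?_⟩
  push_cast
  rw [pow_add, pow_add]
  field_simp

lemma not_one_div_three : ¬ IsDyadic (1 / 3) := by
  rintro ⟨k, n, h⟩
  have hpow : ((2 ^ n : ℤ) : ℝ) = ((3 * k : ℤ) : ℝ) := by
    push_cast
    field_simp at h
    linarith
  have hdvd : (3 : ℤ) ∣ 2 ^ n := ⟨k, by exact_mod_cast hpow⟩
  have := Int.prime_three.dvd_of_dvd_pow hdvd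
  norm_num at this

end IsDyadic

namespace MeanClosure2

variable {X : Set (ℝ × ℝ)} {p : ℝ × ℝ}

lemma snd_nonneg (hX : ∀ q ∈ X, 0 ≤ q.2) (hp : MeanClosure2 X p) : 0 ≤ p.2 := by
  induction hp with
  | base hmem => exact hX _ hmem
  | mean _ _ iha ihb => exact div_nonneg (add_nonneg iha ihb) zero_le_two

lemma of_snd_eq_zero (hX : ∀ q ∈ X, 0 ≤ q.2) (hp : MeanClosure2 X p) (hp0 : p.2 = 0) :
    MeanClosure2 {q ∈ X | q.2 = 0} p := by
  induction hp with
  | base hmem => exact base ⟨hmem, hp0⟩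
  | @mean a b ha hb iha ihb =>
    have ha0 := snd_nonneg hX ha
    have hb0 := snd_nonneg hX hb
    simp only at hp0
    exact mean (iha (by linarith)) (ihb (by linarith))

lemma isDyadic_fst_div (c : ℝ) (hX : ∀ q ∈ X, IsDyadic (q.1 / c)) (hp : MeanClosure2 X p) :
    IsDyadic (p.1 / c) := by
  induction hp with
  | base hmem => exact hX _ hmem
  | mean _ _ iha ihb => simpa only [add_div, div_right_comm] using iha.avg ihb

end MeanClosure2

theorem four_points_do_not_generate_one_zero :
    ¬ MeanClosure2 {((0 : ℝ), (0 : ℝ)), (1, 3), (3, 0), (1, 1)} (1, 0) ∧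
    ((1 : ℝ), (0 : ℝ)) ∈ convexHull ℝ {((0 : ℝ), (0 : ℝ)), (1, 3), (3, 0)} := by
  constructor
  · intro h
    have hX : ∀ q ∈ ({(0, 0), (1, 3), (3, 0), (1, 1)} : Set (ℝ × ℝ)), 0 ≤ q.2 := by
      rintro q (rfl | rfl | rfl | rfl) <;> norm_num
    have hbase : ∀ q ∈ {q ∈ ({(0, 0), (1, 3), (3, 0), (1, 1)} : Set (ℝ × ℝ)) | q.2 = 0},
        IsDyadic (q.1 / 3) := by
      rintro q ⟨(rfl | rfl | rfl | rfl), hq0⟩ <;> norm_num at hq0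
      · simpa using IsDyadic.of_int 0
      · simpa using IsDyadic.of_int 1
    exact IsDyadic.not_one_div_three ((h.of_snd_eq_zero hX rfl).isDyadic_fst_div 3 hbase)
  · have hseg : ((1 : ℝ), (0 : ℝ)) ∈ segment ℝ ((0 : ℝ), (0 : ℝ)) ((3 : ℝ), (0 : ℝ)) :=
      ⟨2 / 3, 1 / 3, by norm_num, by norm_num, by norm_num, by norm_num [Prod.ext_iff]⟩
    exact segment_subset_convexHull (by simp) (by simp) hseg
end
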